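/- Let χ be a realizable uniform rank-3 chirotope on n ≥ 3 elements with χ(1,2,3) = +1, and let χ' be the lexicographic extension of χ by [a_1^{σ_1}, a_2^{σ_2}, a_3^{σ_3}] for pairwise distinct a_1, a_2, a_3 ∈ {1,…,n} and signs σ_1, σ_2, σ_3 ∈ {+1,−1}. Then the realization space ℛ(χ') is stably equivalent to the realization space ℛ(χ); in particular, the deletion map ℛ(χ') → ℛ(χ) forgetting the last vector is a stable projection. -/
import Mathlib


noncomputable section

/-- A primary basic semialgebraic set in `ℝ^m` defined over `ℤ`: the solution set of finitely
many polynomial equalities and *strict* polynomial inequalities with integer coefficients. -/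
def IsPrimaryBasicSemialgebraicZ {m : ℕ} (S : Set (Fin m → ℝ)) : Prop :=
  ∃ (k l : ℕ) (f : Fin k → MvPolynomial (Fin m) ℤ) (g : Fin l → MvPolynomial (Fin m) ℤ),
    S = {x : Fin m → ℝ |
      (∀ i, MvPolynomial.aeval x (f i) = (0 : ℝ)) ∧
      (∀ j, (0 : ℝ) < MvPolynomial.aeval x (g j))}

/-- `S ⊆ ℝ^d` is a stable projection of `T ⊆ ℝ^{d+d'}`: the coordinate projection maps `T`
onto `S`, and over each `x ∈ S` the fiber of `T` is a nonempty set given by linear equalities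
and strict linear inequalities in the fiber variables, whose coefficients depend polynomially
on `x` (i.e. the relative interior of a nonempty polyhedron depending polynomially on `x`). -/
def IsStableProjection {d d' : ℕ} (S : Set (Fin d → ℝ)) (T : Set (Fin (d + d') → ℝ)) : Prop :=
  ∃ (k l : ℕ) (A : Fin k → Fin d' → MvPolynomial (Fin d) ℝ) (b : Fin k → MvPolynomial (Fin d) ℝ)
    (C : Fin l → Fin d' → MvPolynomial (Fin d) ℝ) (c : Fin l → MvPolynomial (Fin d) ℝ),
    (∀ x ∈ S, ∃ y : Fin d' → ℝ, Fin.append x y ∈ T) ∧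
    ∀ (x : Fin d → ℝ) (y : Fin d' → ℝ),
      Fin.append x y ∈ T ↔
        x ∈ S ∧
        (∀ i, (∑ j, MvPolynomial.eval x (A i j) * y j) + MvPolynomial.eval x (b i) = 0) ∧
        (∀ i, 0 < (∑ j, MvPolynomial.eval x (C i j) * y j) + MvPolynomial.eval x (c i))

/-- `f` is coordinatewise a rational function on `S` (denominators nonvanishing on `S`). -/
def IsRationalMapOn {d e : ℕ} (S : Set (Fin d → ℝ)) (f : (Fin d → ℝ) → Fin e → ℝ) : Prop :=
  ∀ i : Fin e, ∃ p q : MvPolynomial (Fin d) ℝ, ∀ x ∈ S,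
    MvPolynomial.eval x q ≠ 0 ∧ f x i = MvPolynomial.eval x p / MvPolynomial.eval x q

/-- `S` and `T` are rationally equivalent: there are mutually inverse bijections between them
which are coordinatewise rational (hence in particular a homeomorphism). -/
def RationallyEquivalent {d e : ℕ} (S : Set (Fin d → ℝ)) (T : Set (Fin e → ℝ)) : Prop :=
  ∃ (f : (Fin d → ℝ) → Fin e → ℝ) (g : (Fin e → ℝ) → Fin d → ℝ),
    IsRationalMapOn S f ∧ IsRationalMapOn T g ∧
    (∀ x ∈ S, f x ∈ T) ∧ (∀ y ∈ T, g y ∈ S) ∧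
    (∀ x ∈ S, g (f x) = x) ∧ (∀ y ∈ T, f (g y) = y)

/-- One generating step of stable equivalence: a stable projection (in either direction,
symmetry being supplied by the generated equivalence) or a rational equivalence. -/
def StableStep (X Y : Σ d : ℕ, Set (Fin d → ℝ)) : Prop :=
  (∃ (d' : ℕ) (T : Set (Fin (X.1 + d') → ℝ)),
      Y = ⟨X.1 + d', T⟩ ∧ IsStableProjection X.2 T) ∨
  RationallyEquivalent X.2 Y.2

/-- Stable equivalence: the equivalence relation generated by stable projections and
rational equivalences. -/
def StablyEquivalent (X Y : Σ d : ℕ, Set (Fin d → ℝ)) : Prop :=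
  Relation.EqvGen StableStep X Y

/-- The index of the `c`-th coordinate of the `p`-th point in the flattening
`(ℝ^d)^n ≃ ℝ^{d·n}`. -/
def flatIdx {n d : ℕ} (p : Fin n) (c : Fin d) : Fin (d * n) :=
  ⟨d * p.1 + c.1, by
    have h1 : d * (p.1 + 1) ≤ d * n := Nat.mul_le_mul le_rfl p.2
    have h2 : d * (p.1 + 1) = d * p.1 + d := by ring
    have h3 := c.2
    omega⟩

/-- Flatten a set of point configurations `(ℝ^d)^n` into a subset of `ℝ^{d·n}`. -/
def flat {n d : ℕ} (R : Set (Fin n → Fin d → ℝ)) : Set (Fin (d * n) → ℝ) :=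
  {x | (fun (p : Fin n) (c : Fin d) => x (flatIdx p c)) ∈ R}

/-- The determinant of three vectors in `ℝ³`. -/
def det3 (u v w : Fin 3 → ℝ) : ℝ :=
  u 0 * (v 1 * w 2 - v 2 * w 1) - u 1 * (v 0 * w 2 - v 2 * w 0) +
    u 2 * (v 0 * w 1 - v 1 * w 0)

/-- A map on triples is alternating: swapping two adjacent arguments changes the sign. -/
def IsAlternating3 {n : ℕ} (χ : Fin n → Fin n → Fin n → ℝ) : Prop :=
  ∀ i j k : Fin n, χ j i k = -χ i j k ∧ χ i k j = -χ i j k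

/-- `v` is a realization of the uniform chirotope `χ`: for all distinct `i, j, k`,
the sign of `det(v i, v j, v k)` is `χ i j k`. -/
def IsRealizationOfUniform {n : ℕ} (χ : Fin n → Fin n → Fin n → ℝ)
    (v : Fin n → Fin 3 → ℝ) : Prop :=
  ∀ i j k : Fin n, i ≠ j → i ≠ k → j ≠ k →
    Real.sign (det3 (v i) (v j) (v k)) = χ i j k

/-- A realizable uniform rank-3 chirotope on `n` elements. -/
def IsRealizableUniformChirotope {n : ℕ} (χ : Fin n → Fin n → Fin n → ℝ) : Prop :=
  IsAlternating3 χ ∧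
  (∀ i j k : Fin n, i ≠ j → i ≠ k → j ≠ k → χ i j k = 1 ∨ χ i j k = -1) ∧
  ∃ v, IsRealizationOfUniform χ v

/-- The normalized realization space of a uniform rank-3 chirotope `χ`
(normalized so that the first three vectors are the standard basis of `ℝ³`,
which presupposes `χ 1 2 3 = +1`). -/
def uniformChirotopeRealizationSpace {n : ℕ} (hn : 3 ≤ n)
    (χ : Fin n → Fin n → Fin n → ℝ) : Set (Fin n → Fin 3 → ℝ) :=
  {v | v ⟨0, by omega⟩ = ![1, 0, 0] ∧ v ⟨1, by omega⟩ = ![0, 1, 0] ∧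
       v ⟨2, by omega⟩ = ![0, 0, 1] ∧ IsRealizationOfUniform χ v}

/-- `χ'` is the lexicographic extension of `χ` by `[a₁^{σ₁}, a₂^{σ₂}, a₃^{σ₃}]`:
the alternating sign map on triples from `{1,…,n+1}` that agrees with `χ` on triples from
`{1,…,n}` and whose values on the new element `n+1` follow the lexicographic rule. -/
def IsLexExtension {n : ℕ} (χ : Fin n → Fin n → Fin n → ℝ)
    (a₁ a₂ a₃ : Fin n) (σ₁ σ₂ σ₃ : ℝ)
    (χ' : Fin (n + 1) → Fin (n + 1) → Fin (n + 1) → ℝ) : Prop :=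
  IsAlternating3 χ' ∧
  (∀ i j k : Fin n, χ' i.castSucc j.castSucc k.castSucc = χ i j k) ∧
  ∀ i j : Fin n, i ≠ j →
    χ' i.castSucc j.castSucc (Fin.last n) =
      if a₁ ≠ i ∧ a₁ ≠ j then σ₁ * χ i j a₁
      else if a₂ ≠ i ∧ a₂ ≠ j then σ₂ * χ i j a₂
      else σ₃ * χ i j a₃

namespace LexAux

lemma sign_eq_iff_pm {s : ℝ} (hs : s = 1 ∨ s = -1) (t : ℝ) :
    Real.sign t = s ↔ 0 < s * t := by
  rcases lt_trichotomy t 0 with h|h|h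
  · rw [Real.sign_of_neg h]
    rcases hs with rfl|rfl <;> constructor <;> intro h2 <;> nlinarith
  · subst h; rw [Real.sign_zero]; rcases hs with rfl|rfl <;> norm_num
  · rw [Real.sign_of_pos h]
    rcases hs with rfl|rfl <;> constructor <;> intro h2 <;> nlinarith

lemma det3_rep1 (u v : Fin 3 → ℝ) : det3 u v u = 0 := by unfold det3; ring
lemma det3_rep2 (u v : Fin 3 → ℝ) : det3 u v v = 0 := by unfold det3; ring

lemma det3_lin (u v a b c : Fin 3 → ℝ) (α β γ : ℝ) :
    det3 u v (fun i => α * a i + β * b i + γ * c i)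
      = α * det3 u v a + β * det3 u v b + γ * det3 u v c := by
  simp only [det3]; ring

/-- The point configuration attached to a flattened vector. -/
def ptsOf {n : ℕ} (x : Fin (3*n) → ℝ) : Fin n → Fin 3 → ℝ := fun p c => x (flatIdx p c)

lemma mem_flat {n : ℕ} (R : Set (Fin n → Fin 3 → ℝ)) (x : Fin (3*n) → ℝ) :
    x ∈ flat R ↔ ptsOf x ∈ R := Iff.rfl

lemma append_flat_eq {n : ℕ} (x : Fin (3*n) → ℝ) (y : Fin 3 → ℝ) :
    (fun (p : Fin (n+1)) (c : Fin 3) => Fin.append x y (flatIdx p c))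
      = Fin.snoc (ptsOf x) y := by
  funext p c
  induction p using Fin.lastCases with
  | last =>
      rw [Fin.snoc_last]
      have h : flatIdx (Fin.last n) c = Fin.natAdd (3*n) c := by
        apply Fin.ext; simp [flatIdx, Fin.last]
      rw [h, Fin.append_right]
  | cast p =>
      rw [Fin.snoc_castSucc]
      have h : flatIdx (Fin.castSucc p) c = Fin.castAdd 3 (flatIdx p c) := by
        apply Fin.ext; simp [flatIdx]
      rw [h, Fin.append_left]
      rfl

lemma snoc_mk_lt {n : ℕ} {α : Type*} (V : Fin n → α) (y : α) (m : ℕ) (h : m < n)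
    (h' : m < n + 1) :
    Fin.snoc (α := fun _ => α) V y ⟨m, h'⟩ = V ⟨m, h⟩ := by
  have e : (⟨m, h'⟩ : Fin (n+1)) = Fin.castSucc ⟨m, h⟩ := rfl
  rw [e, Fin.snoc_castSucc]

lemma quad_pos (A B C : ℝ)
    (h : 0 < A ∨ (A = 0 ∧ 0 < B) ∨ (A = 0 ∧ B = 0 ∧ 0 < C)) :
    ∃ δ, 0 < δ ∧ ∀ ε : ℝ, 0 < ε → ε < δ → 0 < A + B*ε + C*ε^2 := by
  rcases h with h | ⟨hA, hB⟩ | ⟨hA, hB, hC⟩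
  · refine ⟨min 1 (A/(|B|+|C|+1)), ?_, ?_⟩
    · have hd : 0 < |B|+|C|+1 := by positivity
      exact lt_min one_pos (div_pos h hd)
    · intro ε hε hεδ
      have h1 : ε < 1 := lt_of_lt_of_le hεδ (min_le_left _ _)
      have hd : 0 < |B|+|C|+1 := by positivity
      have h2 : ε * (|B|+|C|+1) < A :=
        (lt_div_iff₀ hd).1 (lt_of_lt_of_le hεδ (min_le_right _ _))
      have hB' : -|B| ≤ B := neg_abs_le B
      have hC' : -|C| ≤ C := neg_abs_le C
      have hsq : ε^2 ≤ ε := by nlinarith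
      nlinarith [abs_nonneg B, abs_nonneg C, sq_nonneg ε,
        mul_le_mul_of_nonneg_right hB' hε.le,
        mul_le_mul_of_nonneg_right hC' (sq_nonneg ε),
        mul_le_mul_of_nonneg_left hsq (abs_nonneg C)]
  · refine ⟨min 1 (B/(|C|+1)), ?_, ?_⟩
    · have hd : 0 < |C|+1 := by positivity
      exact lt_min one_pos (div_pos hB hd)
    · intro ε hε hεδ
      have h1 : ε < 1 := lt_of_lt_of_le hεδ (min_le_left _ _)
      have hd : 0 < |C|+1 := by positivity
      have h2 : ε * (|C|+1) < B :=
        (lt_div_iff₀ hd).1 (lt_of_lt_of_le hεδ (min_le_right _ _))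
      have hC' : -|C| ≤ C := neg_abs_le C
      subst hA
      nlinarith [abs_nonneg C, mul_le_mul_of_nonneg_right hC' hε.le, mul_pos hε hε]
  · exact ⟨1, one_pos, fun ε hε _ => by subst hA; subst hB; nlinarith [mul_pos hε hε]⟩

/-- The polynomial cofactors expressing `y ↦ det3 (v i) (v j) y` linearly in `y`. -/
def lexCof {n : ℕ} (i j : Fin n) : Fin 3 → MvPolynomial (Fin (3*n)) ℝ :=
  ![MvPolynomial.X (flatIdx i 1) * MvPolynomial.X (flatIdx j 2)
      - MvPolynomial.X (flatIdx i 2) * MvPolynomial.X (flatIdx j 1),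
    MvPolynomial.X (flatIdx i 2) * MvPolynomial.X (flatIdx j 0)
      - MvPolynomial.X (flatIdx i 0) * MvPolynomial.X (flatIdx j 2),
    MvPolynomial.X (flatIdx i 0) * MvPolynomial.X (flatIdx j 1)
      - MvPolynomial.X (flatIdx i 1) * MvPolynomial.X (flatIdx j 0)]

lemma lexCof_eval {n : ℕ} (x : Fin (3*n) → ℝ) (y : Fin 3 → ℝ) (i j : Fin n) :
    (∑ c, MvPolynomial.eval x (lexCof i j c) * y c) = det3 (ptsOf x i) (ptsOf x j) y := by
  rw [Fin.sum_univ_three]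
  simp only [lexCof, det3, ptsOf, Matrix.cons_val_zero, Matrix.cons_val_one, Matrix.head_cons,
    map_sub, map_mul, MvPolynomial.eval_X, Matrix.cons_val_two, Matrix.tail_cons]
  ring

end LexAux

/-- **Lemma 2.1 (stable-equivalence form), realizable rank-3 case**: the realization space of
a lexicographic extension `χ'` of a realizable uniform rank-3 chirotope `χ` is stably
equivalent to that of `χ`; in particular the deletion map forgetting the last vector is a
stable projection (of the flattened realization spaces, the new vector occupying the last
three coordinates). -/
theorem lex_extension_stably_equivalent (n : ℕ) (hn : 3 ≤ n)
    (χ : Fin n → Fin n → Fin n → ℝ) (hχ : IsRealizableUniformChirotope χ)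
    (hnorm : χ ⟨0, by omega⟩ ⟨1, by omega⟩ ⟨2, by omega⟩ = 1)
    (a₁ a₂ a₃ : Fin n) (h12 : a₁ ≠ a₂) (h13 : a₁ ≠ a₃) (h23 : a₂ ≠ a₃)
    (σ₁ σ₂ σ₃ : ℝ) (hσ₁ : σ₁ = 1 ∨ σ₁ = -1) (hσ₂ : σ₂ = 1 ∨ σ₂ = -1)
    (hσ₃ : σ₃ = 1 ∨ σ₃ = -1)
    (χ' : Fin (n + 1) → Fin (n + 1) → Fin (n + 1) → ℝ)
    (hχ' : IsLexExtension χ a₁ a₂ a₃ σ₁ σ₂ σ₃ χ') :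
    StablyEquivalent
      ⟨3 * (n + 1),
        flat (uniformChirotopeRealizationSpace (show 3 ≤ n + 1 by omega) χ')⟩
      ⟨3 * n, flat (uniformChirotopeRealizationSpace hn χ)⟩ ∧
    IsStableProjection (d := 3 * n) (d' := 3)
      (flat (uniformChirotopeRealizationSpace hn χ))
      (flat (uniformChirotopeRealizationSpace (show 3 ≤ n + 1 by omega) χ')) := by
  classical
  open LexAux in
  obtain ⟨-, hval, -⟩ := hχ
  obtain ⟨halt', hagree, hlex⟩ := hχ'
  have pm : ∀ σ c : ℝ, (σ = 1 ∨ σ = -1) → (c = 1 ∨ c = -1) → (σ * c = 1 ∨ σ * c = -1) := by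
    rintro σ c (rfl|rfl) (rfl|rfl) <;> norm_num
  -- the third case of the lexicographic rule
  have hthird : ∀ i j : Fin n, (a₁ = i ∨ a₁ = j) → (a₂ = i ∨ a₂ = j) → a₃ ≠ i ∧ a₃ ≠ j := by
    intro i j h1 h2
    rcases h1 with h1|h1 <;> rcases h2 with h2|h2
    · exact absurd (h1.trans h2.symm) h12
    · exact ⟨fun he => h13 (h1.trans he.symm), fun he => h23 (h2.trans he.symm)⟩
    · exact ⟨fun he => h23 (h2.trans he.symm), fun he => h13 (h1.trans he.symm)⟩
    · exact absurd (h1.trans h2.symm) h12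
  -- the sign attached to the new element is ±1
  have hsval : ∀ i j : Fin n, i ≠ j →
      χ' i.castSucc j.castSucc (Fin.last n) = 1 ∨
        χ' i.castSucc j.castSucc (Fin.last n) = -1 := by
    intro i j hij
    rw [hlex i j hij]
    split_ifs with h1 h2
    · exact pm _ _ hσ₁ (hval i j a₁ hij (Ne.symm h1.1) (Ne.symm h1.2))
    · exact pm _ _ hσ₂ (hval i j a₂ hij (Ne.symm h2.1) (Ne.symm h2.2))
    · simp only [not_and_or, not_ne_iff] at h1 h2
      obtain ⟨h3i, h3j⟩ := hthird i j h1 h2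
      exact pm _ _ hσ₃ (hval i j a₃ hij (Ne.symm h3i) (Ne.symm h3j))
  -- characterization of membership in the extended realization space
  have char : ∀ (x : Fin (3*n) → ℝ) (y : Fin 3 → ℝ),
      Fin.append x y ∈ flat (uniformChirotopeRealizationSpace (show 3 ≤ n + 1 by omega) χ') ↔
        (x ∈ flat (uniformChirotopeRealizationSpace hn χ) ∧
          ∀ i j : Fin n, i ≠ j →
            0 < χ' i.castSucc j.castSucc (Fin.last n) *
                det3 (LexAux.ptsOf x i) (LexAux.ptsOf x j) y) := by
    intro x y
    have hm : Fin.append x y ∈ flat (uniformChirotopeRealizationSpace (show 3 ≤ n + 1 by omega) χ')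
        ↔ Fin.snoc (LexAux.ptsOf x) y ∈
            uniformChirotopeRealizationSpace (show 3 ≤ n + 1 by omega) χ' := by
      exact Iff.of_eq (congrArg
        (fun v => v ∈ uniformChirotopeRealizationSpace (show 3 ≤ n + 1 by omega) χ')
        (LexAux.append_flat_eq x y))
    rw [hm, LexAux.mem_flat]
    constructor
    · rintro ⟨h0, h1, h2, hreal⟩
      refine ⟨⟨?_, ?_, ?_, ?_⟩, ?_⟩
      · rwa [LexAux.snoc_mk_lt _ _ 0 (by omega)] at h0
      · rwa [LexAux.snoc_mk_lt _ _ 1 (by omega)] at h1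
      · rwa [LexAux.snoc_mk_lt _ _ 2 (by omega)] at h2
      · intro i j k hij hik hjk
        have h := hreal i.castSucc j.castSucc k.castSucc
          ((Fin.castSucc_injective n).ne hij) ((Fin.castSucc_injective n).ne hik)
          ((Fin.castSucc_injective n).ne hjk)
        rwa [Fin.snoc_castSucc, Fin.snoc_castSucc, Fin.snoc_castSucc, hagree] at h
      · intro i j hij
        have h := hreal i.castSucc j.castSucc (Fin.last n)
          ((Fin.castSucc_injective n).ne hij) (Fin.castSucc_lt_last i).ne
          (Fin.castSucc_lt_last j).ne
        rw [Fin.snoc_castSucc, Fin.snoc_castSucc, Fin.snoc_last] at h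
        exact (LexAux.sign_eq_iff_pm (hsval i j hij) _).1 h
    · rintro ⟨⟨h0, h1, h2, hreal⟩, hineq⟩
      refine ⟨?_, ?_, ?_, ?_⟩
      · rw [LexAux.snoc_mk_lt _ _ 0 (by omega)]; exact h0
      · rw [LexAux.snoc_mk_lt _ _ 1 (by omega)]; exact h1
      · rw [LexAux.snoc_mk_lt _ _ 2 (by omega)]; exact h2
      · intro i' j' k' hij hik hjk
        rcases Fin.eq_castSucc_or_eq_last k' with ⟨k, rfl⟩ | rfl
        · rcases Fin.eq_castSucc_or_eq_last j' with ⟨j, rfl⟩ | rfl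
          · rcases Fin.eq_castSucc_or_eq_last i' with ⟨i, rfl⟩ | rfl
            · -- all three old elements
              have hij' : i ≠ j := fun h => hij (congrArg Fin.castSucc h)
              have hik' : i ≠ k := fun h => hik (congrArg Fin.castSucc h)
              have hjk' : j ≠ k := fun h => hjk (congrArg Fin.castSucc h)
              rw [Fin.snoc_castSucc, Fin.snoc_castSucc, Fin.snoc_castSucc, hagree]
              exact hreal i j k hij' hik' hjk'
            · -- i' = last
              have hjk' : j ≠ k := fun h => hjk (congrArg Fin.castSucc h)
              rw [Fin.snoc_last, Fin.snoc_castSucc, Fin.snoc_castSucc]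
              have hd : det3 y (LexAux.ptsOf x j) (LexAux.ptsOf x k)
                  = det3 (LexAux.ptsOf x j) (LexAux.ptsOf x k) y := by
                simp only [det3]; ring
              have hc : χ' (Fin.last n) j.castSucc k.castSucc
                  = χ' j.castSucc k.castSucc (Fin.last n) := by
                rw [(halt' j.castSucc (Fin.last n) k.castSucc).1,
                  (halt' j.castSucc k.castSucc (Fin.last n)).2, neg_neg]
              rw [hd, hc]
              exact (LexAux.sign_eq_iff_pm (hsval j k hjk') _).2 (hineq j k hjk')
          · -- j' = last
            rcases Fin.eq_castSucc_or_eq_last i' with ⟨i, rfl⟩ | rfl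
            · have hik' : i ≠ k := fun h => hik (congrArg Fin.castSucc h)
              rw [Fin.snoc_castSucc, Fin.snoc_last, Fin.snoc_castSucc]
              have hd : det3 (LexAux.ptsOf x i) y (LexAux.ptsOf x k)
                  = -det3 (LexAux.ptsOf x i) (LexAux.ptsOf x k) y := by
                simp only [det3]; ring
              have hc : χ' i.castSucc (Fin.last n) k.castSucc
                  = -χ' i.castSucc k.castSucc (Fin.last n) :=
                (halt' i.castSucc k.castSucc (Fin.last n)).2
              rw [hd, hc, Real.sign_neg,
                (LexAux.sign_eq_iff_pm (hsval i k hik') _).2 (hineq i k hik')]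
            · exact absurd rfl hij
        · -- k' = last
          rcases Fin.eq_castSucc_or_eq_last j' with ⟨j, rfl⟩ | rfl
          · rcases Fin.eq_castSucc_or_eq_last i' with ⟨i, rfl⟩ | rfl
            · have hij' : i ≠ j := fun h => hij (congrArg Fin.castSucc h)
              rw [Fin.snoc_castSucc, Fin.snoc_castSucc, Fin.snoc_last]
              exact (LexAux.sign_eq_iff_pm (hsval i j hij') _).2 (hineq i j hij')
            · exact absurd rfl hik
          · exact absurd rfl hjk
  -- the stable projection
  have key : IsStableProjection (d := 3*n) (d' := 3)
      (flat (uniformChirotopeRealizationSpace hn χ))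
      (flat (uniformChirotopeRealizationSpace (show 3 ≤ n + 1 by omega) χ')) := by
    refine ⟨0, n*n, Fin.elim0, Fin.elim0,
      (fun t c =>
        if (finProdFinEquiv.symm t).1 = (finProdFinEquiv.symm t).2 then 0
        else MvPolynomial.C (χ' (finProdFinEquiv.symm t).1.castSucc
            (finProdFinEquiv.symm t).2.castSucc (Fin.last n)) *
          LexAux.lexCof (finProdFinEquiv.symm t).1 (finProdFinEquiv.symm t).2 c),
      (fun t =>
        if (finProdFinEquiv.symm t).1 = (finProdFinEquiv.symm t).2 then 1 else 0),
      ?_, ?_⟩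
    · -- surjectivity via perturbation
      intro x hx
      obtain ⟨-, -, -, hr⟩ := id hx
      have hreal : ∀ i j k : Fin n, i ≠ j → i ≠ k → j ≠ k →
          0 < χ i j k * det3 (LexAux.ptsOf x i) (LexAux.ptsOf x j) (LexAux.ptsOf x k) :=
        fun i j k hij hik hjk =>
          (LexAux.sign_eq_iff_pm (hval i j k hij hik hjk) _).1 (hr i j k hij hik hjk)
      have hex : ∀ p : Fin n × Fin n, ∃ δ, 0 < δ ∧ ∀ ε : ℝ, 0 < ε → ε < δ →
          (p.1 ≠ p.2 → 0 < χ' p.1.castSucc p.2.castSucc (Fin.last n) *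
            det3 (LexAux.ptsOf x p.1) (LexAux.ptsOf x p.2)
              (fun c => σ₁ * LexAux.ptsOf x a₁ c + ε*σ₂ * LexAux.ptsOf x a₂ c
                + ε^2*σ₃ * LexAux.ptsOf x a₃ c)) := by
        rintro ⟨i, j⟩
        by_cases hij : i = j
        · exact ⟨1, one_pos, fun ε _ _ h => absurd hij h⟩
        · set s := χ' i.castSucc j.castSucc (Fin.last n) with hs_def
          set D₁ := det3 (LexAux.ptsOf x i) (LexAux.ptsOf x j) (LexAux.ptsOf x a₁) with hD₁def
          set D₂ := det3 (LexAux.ptsOf x i) (LexAux.ptsOf x j) (LexAux.ptsOf x a₂) with hD₂def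
          set D₃ := det3 (LexAux.ptsOf x i) (LexAux.ptsOf x j) (LexAux.ptsOf x a₃) with hD₃def
          have hcase : 0 < s*σ₁*D₁ ∨ (s*σ₁*D₁ = 0 ∧ 0 < s*σ₂*D₂) ∨
              (s*σ₁*D₁ = 0 ∧ s*σ₂*D₂ = 0 ∧ 0 < s*σ₃*D₃) := by
            by_cases h1 : a₁ ≠ i ∧ a₁ ≠ j
            · left
              have hsv : s = σ₁ * χ i j a₁ := by rw [hs_def, hlex i j hij, if_pos h1]
              have hpos := hreal i j a₁ hij (Ne.symm h1.1) (Ne.symm h1.2)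
              rcases hσ₁ with rfl|rfl <;> rw [hsv] <;> nlinarith [hpos]
            · simp only [not_and_or, not_ne_iff] at h1
              have hn1 : ¬(a₁ ≠ i ∧ a₁ ≠ j) := fun hc => h1.elim (fun h => hc.1 h) (fun h => hc.2 h)
              have hD1 : D₁ = 0 := by
                rw [hD₁def]
                rcases h1 with rfl|rfl
                · exact LexAux.det3_rep1 _ _
                · exact LexAux.det3_rep2 _ _
              by_cases h2 : a₂ ≠ i ∧ a₂ ≠ j
              · right; left
                refine ⟨by rw [hD1]; ring, ?_⟩
                have hsv : s = σ₂ * χ i j a₂ := by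
                  rw [hs_def, hlex i j hij, if_neg hn1, if_pos h2]
                have hpos := hreal i j a₂ hij (Ne.symm h2.1) (Ne.symm h2.2)
                rcases hσ₂ with rfl|rfl <;> rw [hsv] <;> nlinarith [hpos]
              · right; right
                simp only [not_and_or, not_ne_iff] at h2
                have hn2 : ¬(a₂ ≠ i ∧ a₂ ≠ j) :=
                  fun hc => h2.elim (fun h => hc.1 h) (fun h => hc.2 h)
                have hD2 : D₂ = 0 := by
                  rw [hD₂def]
                  rcases h2 with rfl|rfl
                  · exact LexAux.det3_rep1 _ _
                  · exact LexAux.det3_rep2 _ _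
                obtain ⟨h3i, h3j⟩ := hthird i j h1 h2
                have hsv : s = σ₃ * χ i j a₃ := by
                  rw [hs_def, hlex i j hij, if_neg hn1, if_neg hn2]
                have hpos := hreal i j a₃ hij (Ne.symm h3i) (Ne.symm h3j)
                refine ⟨by rw [hD1]; ring, by rw [hD2]; ring, ?_⟩
                rcases hσ₃ with rfl|rfl <;> rw [hsv] <;> nlinarith [hpos]
          obtain ⟨δ, hδ, hq⟩ := LexAux.quad_pos _ _ _ hcase
          refine ⟨δ, hδ, fun ε hε hεδ _ => ?_⟩
          have hdet := LexAux.det3_lin (LexAux.ptsOf x i) (LexAux.ptsOf x j)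
            (LexAux.ptsOf x a₁) (LexAux.ptsOf x a₂) (LexAux.ptsOf x a₃) σ₁ (ε*σ₂) (ε^2*σ₃)
          rw [hdet]
          have h2 := hq ε hε hεδ
          nlinarith [h2]
      choose δf hδ hq using hex
      have hne : (Finset.univ : Finset (Fin n × Fin n)).Nonempty :=
        ⟨(⟨0, by omega⟩, ⟨0, by omega⟩), Finset.mem_univ _⟩
      have hδ0pos : 0 < Finset.univ.inf' hne δf :=
        (Finset.lt_inf'_iff hne).2 fun p _ => hδ p
      set ε := Finset.univ.inf' hne δf / 2 with hεdef
      have hεpos : 0 < ε := half_pos hδ0pos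
      have hεlt : ∀ p : Fin n × Fin n, ε < δf p := fun p =>
        lt_of_lt_of_le (half_lt_self hδ0pos) (Finset.inf'_le _ (Finset.mem_univ p))
      refine ⟨(fun c => σ₁ * LexAux.ptsOf x a₁ c + ε*σ₂ * LexAux.ptsOf x a₂ c
        + ε^2*σ₃ * LexAux.ptsOf x a₃ c), ?_⟩
      exact (char x _).2 ⟨hx, fun i j hij => hq (i, j) ε hεpos (hεlt (i, j)) hij⟩
    · -- fiber description
      intro x y
      rw [char x y]
      constructor
      · rintro ⟨hx, hin⟩
        refine ⟨hx, fun i => i.elim0, fun t => ?_⟩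
        by_cases hij : (finProdFinEquiv.symm t).1 = (finProdFinEquiv.symm t).2
        · simp only [if_pos hij, map_zero, map_one, zero_mul, Finset.sum_const_zero, zero_add]
          exact one_pos
        · have hin' := hin _ _ hij
          simp only [if_neg hij, map_mul, MvPolynomial.eval_C, mul_assoc, map_zero,
            map_one, add_zero]
          rw [← Finset.mul_sum, LexAux.lexCof_eval]
          exact hin'
      · rintro ⟨hx, -, hin⟩
        refine ⟨hx, fun i j hij => ?_⟩
        have ht := hin (finProdFinEquiv (i, j))
        simp only [Equiv.symm_apply_apply] at ht
        simp only [if_neg hij, map_mul, MvPolynomial.eval_C, mul_assoc, map_zero,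
          add_zero] at ht
        rw [← Finset.mul_sum, LexAux.lexCof_eval] at ht
        exact ht
  refine ⟨?_, key⟩
  exact Relation.EqvGen.symm _ _ (Relation.EqvGen.rel _ _ (Or.inl ⟨3, _, rfl, key⟩))
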